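/- arXiv:2605.22159 — 2 statements merged into one kernel-verified Lean document; each statement's English description precedes it below -/
import Mathlib

section
/- Jump relation: in the second-order setting, for every g ∈ H^{-1/2}(Σ) the single-layer potential v := S g satisfies [∂_ν v]_Σ = g, i.e. the conormal jump of S g across Σ equals the density g; conversely every v in the space W of solutions satisfies the Green representation v = S([∂_ν v]_Σ). Abstractly: if the jump operator J : W → B is defined by ⟨J v, conj(γ w)⟩_{B×X} = ℓ(v, w) for all w ∈ V, then J ∘ S = id_B and S ∘ J = id_W. -/
open NormedSpace

/-- The adjoint (dual) trace map `γ' : B = X' → V'`, `g ↦ g ∘ γ`. -/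
noncomputable def gammaAdj {V X : Type*} [NormedAddCommGroup V] [NormedSpace ℂ V]
    [NormedAddCommGroup X] [NormedSpace ℂ X] (γ : V →L[ℂ] X) :
    StrongDual ℂ X →L[ℂ] StrongDual ℂ V :=
  (ContinuousLinearMap.compL ℂ V X ℂ).flip γ

/- Since `γ` is onto, its adjoint `γ'` is injective. For `g ∈ B` the potential `S g = L⁻¹ γ' g`
satisfies `L (S g) = γ' g`, which vanishes on `ker γ`; so `γ' (J (S g)) = L (S g) = γ' g`, whence
`J (S g) = g`. For `L`-harmonic `v` the defining property of `J` reads `γ' (J v) = L v`, so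
`S (J v) = L⁻¹ (L v) = v`. -/

section GammaAdj

variable {V X : Type*} [NormedAddCommGroup V] [NormedSpace ℂ V]
  [NormedAddCommGroup X] [NormedSpace ℂ X]

@[simp]
theorem gammaAdj_apply (γ : V →L[ℂ] X) (g : StrongDual ℂ X) (w : V) :
    gammaAdj γ g w = g (γ w) :=
  rfl

theorem gammaAdj_apply_of_mem_ker {γ : V →L[ℂ] X} (g : StrongDual ℂ X) {w : V} (hw : γ w = 0) :
    gammaAdj γ g w = 0 := by
  rw [gammaAdj_apply, hw, map_zero]

theorem gammaAdj_injective {γ : V →L[ℂ] X} (hγ : Function.Surjective γ) :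
    Function.Injective (gammaAdj γ) := by
  intro g h hgh
  ext t
  obtain ⟨w, rfl⟩ := hγ t
  simpa only [gammaAdj_apply] using congr($hgh w)

theorem gammaAdj_eq_of_apply_eq {γ : V →L[ℂ] X} {g : StrongDual ℂ X} {f : StrongDual ℂ V}
    (h : ∀ w, g (γ w) = f w) : gammaAdj γ g = f :=
  ContinuousLinearMap.ext h

end GammaAdj

theorem jump_relation_general
    {V X : Type*} [NormedAddCommGroup V] [InnerProductSpace ℂ V]
    [NormedAddCommGroup X] [InnerProductSpace ℂ X]
    (L : V →L[ℂ] StrongDual ℂ V) (N : StrongDual ℂ V →L[ℂ] V)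
    (hNL : ∀ v, N (L v) = v) (hLN : ∀ f, L (N f) = f)
    (γ : V →L[ℂ] X) (hγsurj : Function.Surjective γ)
    (J : V → StrongDual ℂ X)
    (hJ : ∀ v : V, (∀ w : V, γ w = 0 → L v w = 0) →
      ∀ w : V, J v (γ w) = L v w) :
    (∀ g : StrongDual ℂ X, J (N (gammaAdj γ g)) = g) ∧
    (∀ v : V, (∀ w : V, γ w = 0 → L v w = 0) → N (gammaAdj γ (J v)) = v) := by
  have jump_adj : ∀ v, (∀ w, γ w = 0 → L v w = 0) → gammaAdj γ (J v) = L v :=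
    fun v hv => gammaAdj_eq_of_apply_eq (hJ v hv)
  constructor
  · intro g
    have harmonic : ∀ w, γ w = 0 → L (N (gammaAdj γ g)) w = 0 := fun w hw => by
      rw [hLN]
      exact gammaAdj_apply_of_mem_ker g hw
    apply gammaAdj_injective hγsurj
    rw [jump_adj _ harmonic, hLN]
  · intro v hv
    rw [jump_adj v hv, hNL]

/-- jump relation and single-layer Green representation.  If the jump
operator `J` satisfies `⟨J v, γ w⟩ = ℓ(v, w)` for all `w ∈ V` and `L`-harmonic `v`,
then `J ∘ S = id_B` on `B` and `S ∘ J = id_W` on the space `W` of `L`-harmonic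
functions, where `S = L⁻¹ γ'` is the single-layer potential. -/
theorem jump_relation
    {V X : Type*} [NormedAddCommGroup V] [InnerProductSpace ℂ V] [CompleteSpace V]
    [NormedAddCommGroup X] [InnerProductSpace ℂ X] [CompleteSpace X]
    (L : V →L[ℂ] StrongDual ℂ V) (N : StrongDual ℂ V →L[ℂ] V)
    (hNL : ∀ v, N (L v) = v) (hLN : ∀ f, L (N f) = f)
    (c_L : ℝ) (hc : 0 < c_L)
    (hcoer : ∀ v : V, c_L * ‖v‖ ^ 2 ≤ ‖L v v‖)
    (γ : V →L[ℂ] X) (hγsurj : Function.Surjective γ)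
    (hquot : ∀ t : X, ‖t‖ = ⨅ v : {v : V // γ v = t}, ‖(v : V)‖)
    (J : V → StrongDual ℂ X)
    (hJ : ∀ v : V, (∀ w : V, γ w = 0 → L v w = 0) →
      ∀ w : V, J v (γ w) = L v w) :
    (∀ g : StrongDual ℂ X, J (N (gammaAdj γ g)) = g) ∧
    (∀ v : V, (∀ w : V, γ w = 0 → L v w = 0) → N (gammaAdj γ (J v)) = v) :=
  jump_relation_general L N hNL hLN γ hγsurj J hJ
end

section
/- Lower bound for the dual trace: under the coercivity assumption, for every g ∈ B = X' one has ‖g‖_B ≤ ‖γ' g‖_{V'} ≤ ‖g‖_B and |⟨𝖵g, conj g⟩_{X×B}| ≥ c_L ‖S g‖²_V ≥ (c_L/‖L‖²)‖γ' g‖²_{V'}. -/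
/-! With the quotient norm on `X`, `γ` is a contraction, and since every `t ∈ X` has preimages of
norm arbitrarily close to `‖t‖`, precomposition with `γ` cannot shrink the norm of a functional;
hence `γ'` is an isometry. Coercivity applied to `S g = N (γ' g)` bounds `⟨𝖵 g, g⟩` from below,
and `γ' g = L (S g)` gives `‖γ' g‖ ≤ ‖L‖ ‖S g‖`. -/

open NormedSpace

namespace ContinuousLinearMap

variable {𝕜 E F G : Type*} [NontriviallyNormedField 𝕜]
  [SeminormedAddCommGroup E] [NormedSpace 𝕜 E] [SeminormedAddCommGroup F] [NormedSpace 𝕜 F]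
  [SeminormedAddCommGroup G] [NormedSpace 𝕜 G]

section QuotientNorm

variable {γ : E →L[𝕜] F}

theorem norm_apply_le_of_norm_eq_iInf
    (hquot : ∀ t : F, ‖t‖ = ⨅ v : {v : E // γ v = t}, ‖(v : E)‖) (v : E) : ‖γ v‖ ≤ ‖v‖ := by
  rw [hquot (γ v)]
  exact ciInf_le (f := fun w : {w // γ w = γ v} => ‖(w : E)‖)
    ⟨0, Set.forall_mem_range.2 fun w => norm_nonneg _⟩ ⟨v, rfl⟩

theorem opNorm_le_one_of_norm_eq_iInf
    (hquot : ∀ t : F, ‖t‖ = ⨅ v : {v : E // γ v = t}, ‖(v : E)‖) : ‖γ‖ ≤ 1 :=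
  γ.opNorm_le_bound zero_le_one fun v => by
    simpa only [one_mul] using norm_apply_le_of_norm_eq_iInf hquot v

theorem opNorm_le_opNorm_comp_of_norm_eq_iInf
    (hquot : ∀ t : F, ‖t‖ = ⨅ v : {v : E // γ v = t}, ‖(v : E)‖) (hsurj : Function.Surjective γ)
    (g : F →L[𝕜] G) : ‖g‖ ≤ ‖g.comp γ‖ := by
  refine g.opNorm_le_bound (norm_nonneg _) fun t => ?_
  obtain ⟨v₀, hv₀⟩ := hsurj t
  have : Nonempty {v : E // γ v = t} := ⟨⟨v₀, hv₀⟩⟩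
  rw [hquot t, Real.mul_iInf_of_nonneg (norm_nonneg _)]
  refine le_ciInf fun v => ?_
  calc ‖g t‖ = ‖g.comp γ v‖ := by rw [comp_apply, v.2]
    _ ≤ ‖g.comp γ‖ * ‖(v : E)‖ := (g.comp γ).le_opNorm _

end QuotientNorm

theorem div_opNorm_sq_mul_norm_apply_sq_le (T : E →L[𝕜] F) {c : ℝ} (hc : 0 ≤ c) (x : E) :
    c / ‖T‖ ^ 2 * ‖T x‖ ^ 2 ≤ c * ‖x‖ ^ 2 :=
  calc c / ‖T‖ ^ 2 * ‖T x‖ ^ 2 ≤ c / ‖T‖ ^ 2 * (‖T‖ * ‖x‖) ^ 2 := by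
        gcongr; exact T.le_opNorm x
    _ = c * ‖x‖ ^ 2 * (‖T‖ ^ 2 / ‖T‖ ^ 2) := by ring
    _ ≤ c * ‖x‖ ^ 2 := mul_le_of_le_one_right (by positivity) (div_self_le_one _)

end ContinuousLinearMap

theorem dual_trace_lower_bound_general
    {V X : Type*} [NormedAddCommGroup V] [InnerProductSpace ℂ V]
    [NormedAddCommGroup X] [InnerProductSpace ℂ X]
    (L : V →L[ℂ] StrongDual ℂ V) (N : StrongDual ℂ V →L[ℂ] V)
    (hLN : ∀ f, L (N f) = f)
    (c_L : ℝ) (hc : 0 < c_L)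
    (hcoer : ∀ v : V, c_L * ‖v‖ ^ 2 ≤ ‖L v v‖)
    (γ : V →L[ℂ] X) (hγsurj : Function.Surjective γ)
    (hquot : ∀ t : X, ‖t‖ = ⨅ v : {v : V // γ v = t}, ‖(v : V)‖) :
    ∀ g : StrongDual ℂ X,
      ‖g‖ ≤ ‖gammaAdj γ g‖ ∧ ‖gammaAdj γ g‖ ≤ ‖g‖ ∧
      c_L * ‖N (gammaAdj γ g)‖ ^ 2 ≤ ‖g (γ (N (gammaAdj γ g)))‖ ∧
      c_L / ‖L‖ ^ 2 * ‖gammaAdj γ g‖ ^ 2 ≤ c_L * ‖N (gammaAdj γ g)‖ ^ 2 := by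
  intro g
  have hcomp : gammaAdj γ g = g.comp γ := rfl
  refine ⟨?_, ?_, ?_, ?_⟩
  · exact hcomp ▸ ContinuousLinearMap.opNorm_le_opNorm_comp_of_norm_eq_iInf hquot hγsurj g
  · calc ‖gammaAdj γ g‖ ≤ ‖g‖ * ‖γ‖ := hcomp ▸ g.opNorm_comp_le γ
      _ ≤ ‖g‖ := mul_le_of_le_one_right (norm_nonneg g)
          (ContinuousLinearMap.opNorm_le_one_of_norm_eq_iInf hquot)
  · -- `⟨𝖵 g, g⟩ = ⟨L (S g), S g⟩` because `L ∘ N = id`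
    have h := hcoer (N (gammaAdj γ g))
    rw [hLN] at h
    exact h
  · simpa only [hLN] using L.div_opNorm_sq_mul_norm_apply_sq_le hc.le (N (gammaAdj γ g))

/-- lower bound for the dual trace.  Under coercivity, for every
`g ∈ B = X'` one has `‖g‖_B ≤ ‖γ' g‖_{V'} ≤ ‖g‖_B`, and
`|⟨𝖵 g, ḡ⟩| ≥ c_L ‖S g‖²_V ≥ (c_L/‖L‖²) ‖γ' g‖²_{V'}`. -/
theorem dual_trace_lower_bound
    {V X : Type*} [NormedAddCommGroup V] [InnerProductSpace ℂ V] [CompleteSpace V]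
    [NormedAddCommGroup X] [InnerProductSpace ℂ X] [CompleteSpace X]
    (L : V →L[ℂ] StrongDual ℂ V) (N : StrongDual ℂ V →L[ℂ] V)
    (hNL : ∀ v, N (L v) = v) (hLN : ∀ f, L (N f) = f)
    (c_L : ℝ) (hc : 0 < c_L)
    (hcoer : ∀ v : V, c_L * ‖v‖ ^ 2 ≤ ‖L v v‖)
    (γ : V →L[ℂ] X) (hγsurj : Function.Surjective γ)
    (hquot : ∀ t : X, ‖t‖ = ⨅ v : {v : V // γ v = t}, ‖(v : V)‖) :
    ∀ g : StrongDual ℂ X,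
      ‖g‖ ≤ ‖gammaAdj γ g‖ ∧ ‖gammaAdj γ g‖ ≤ ‖g‖ ∧
      c_L * ‖N (gammaAdj γ g)‖ ^ 2 ≤ ‖g (γ (N (gammaAdj γ g)))‖ ∧
      c_L / ‖L‖ ^ 2 * ‖gammaAdj γ g‖ ^ 2 ≤ c_L * ‖N (gammaAdj γ g)‖ ^ 2 :=
  dual_trace_lower_bound_general L N hLN c_L hc hcoer γ hγsurj hquot
end
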